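/- Let (C, J) be a site with C locally small and admitting pullbacks, let U be an object of C, and let (ι_i : U_i ⟶ U)_{i∈I} be a family whose generated sieve is a J-covering sieve of U. For each i ∈ I let S_i be a sheaf of types on the over category C↓U_i for the induced topology J.over U_i. For each i define the presheaf P_i on C↓U by P_i(V, δ) := S_i(U_i ×_U V, pr₁), and for each (i,j) define the presheaf P_{ij} on C↓U by P_{ij}(V, δ) := S_i((U_i ×_U U_j) ×_U V, q_i) where q_i is the canonical projection to U_i; let r_{ij}(V,δ) : P_i(V,δ) → P_{ij}(V,δ) be the map induced by the canonical morphism (U_i ×_U U_j) ×_U V ⟶ U_i ×_U V over U_i. Suppose given, for each (i,j), a natural isomorphism Φ_{i,j} : P_{ij} ≅ P_{ji}. Define the presheaf L on C↓U by L(V, δ) := { (s_i)_{i∈I} ∈ ∏_{i∈I} P_i(V,δ) | for all i, j ∈ I, Φ_{i,j}(r_{ij}(V,δ)(s_i)) = r_{ji}(V,δ)(s_j) }, with the restriction maps induced componentwise by those of the P_i. Then L is a sheaf of types on C↓U for the topology J.over U. -/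

import Mathlib

/-! The presheaf `L` is cut out of `∏ i, P_i` by the equations `Φ_{i,j} ∘ r_{ij} = r_{ji}`, which
take values in the presheaves `P_{ji}`. Both `P_i` and `P_{ij}` are sheaves: they are `S_i`
precomposed with base change functors, which are continuous since they are isomorphic to
`Over.pullback ι_i`, resp. to `Over.pullback` followed by `Over.map`. A tuple of sections of the
`P_i` satisfying the equations locally satisfies them globally because the `P_{ji}` are separated,
and amalgamation in `L` then reduces to amalgamation in each sheaf `P_i`. -/

open CategoryTheory CategoryTheory.Limits Opposite

universe t w v u

namespace Glue15

variable {C : Type u} [Category.{v} C] [HasPullbacks C]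
variable {I : Type t} {U : C} (X : I → C) (ι : ∀ i, X i ⟶ U)

/-- The base change functor `C↓U ⥤ C↓U_i`, `(V, δ) ↦ (U_i ×_U V, pr₁)`. -/
noncomputable def bc (i : I) : Over U ⥤ Over (X i) where
  obj V := Over.mk (pullback.fst (ι i) V.hom)
  map {V V'} f := Over.homMk
    (pullback.map (ι i) V.hom (ι i) V'.hom (𝟙 _) f.left (𝟙 _) (by simp) (by simp))
    (by exact (pullback.lift_fst _ _ _).trans (Category.comp_id _))
  map_id V := by
    apply Over.OverMorphism.ext
    apply pullback.hom_ext <;> simp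
  map_comp {V V' V''} f g := by
    ext : 1
    refine Eq.trans ?_ (pullback.map_comp (𝟙 _) (𝟙 _) f.left g.left (𝟙 _) (𝟙 _) (by simp) (by simp) (by simp) (by simp)).symm
    simp

end Glue15

namespace Glue15

variable {C : Type u} [Category.{v} C] [HasPullbacks C]
variable {I : Type t} {U : C} (X : I → C) (ι : ∀ i, X i ⟶ U)

/-- The structure morphism `U_i ×_U U_j ⟶ U` of the overlap. -/
noncomputable abbrev wmap (i j : I) : pullback (ι i) (ι j) ⟶ U :=
  pullback.fst (ι i) (ι j) ≫ ι i

/-- The base change functor `C↓U ⥤ C↓U_i`, `(V, δ) ↦ ((U_i ×_U U_j) ×_U V, q_i)`, where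
`q_i` is the canonical projection to `U_i`. -/
noncomputable def bc2 (i j : I) : Over U ⥤ Over (X i) where
  obj V := Over.mk (pullback.fst (wmap X ι i j) V.hom ≫ pullback.fst (ι i) (ι j))
  map {V V'} f := Over.homMk
    (pullback.map (wmap X ι i j) V.hom (wmap X ι i j) V'.hom (𝟙 _) f.left (𝟙 _)
      (by simp) (by simp))
    (by exact (pullback.lift_fst_assoc _ _ _ _).trans (by simp))
  map_id V := by
    apply Over.OverMorphism.ext
    apply pullback.hom_ext <;> simp
  map_comp {V V' V''} f g := by
    ext : 1
    refine Eq.trans ?_ (pullback.map_comp (𝟙 _) (𝟙 _) f.left g.left (𝟙 _) (𝟙 _) (by simp) (by simp) (by simp) (by simp)).symm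
    simp

/-- The canonical morphism `(U_i ×_U U_j) ×_U V ⟶ U_i ×_U V` over `U_i`, natural in `V`. -/
noncomputable def resMor (i j : I) : bc2 X ι i j ⟶ bc X ι i where
  app V := Over.homMk
    (pullback.lift (pullback.fst (wmap X ι i j) V.hom ≫ pullback.fst (ι i) (ι j))
      (pullback.snd (wmap X ι i j) V.hom)
      (by exact (Category.assoc _ _ _).trans pullback.condition))
    (by exact pullback.lift_fst _ _ _)
  naturality {V V'} f := by
    ext : 1
    show pullback.map (wmap X ι i j) V.hom (wmap X ι i j) V'.hom (𝟙 _) f.left (𝟙 _)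
        (by simp) (by simp) ≫
      pullback.lift (pullback.fst (wmap X ι i j) V'.hom ≫ pullback.fst (ι i) (ι j))
        (pullback.snd (wmap X ι i j) V'.hom)
        ((Category.assoc _ _ _).trans pullback.condition) =
      pullback.lift (pullback.fst (wmap X ι i j) V.hom ≫ pullback.fst (ι i) (ι j))
        (pullback.snd (wmap X ι i j) V.hom)
        ((Category.assoc _ _ _).trans pullback.condition) ≫
      pullback.map (ι i) V.hom (ι i) V'.hom (𝟙 _) f.left (𝟙 _) (by simp) (by simp)
    apply pullback.hom_ext <;> simp only [pullback.lift_fst, pullback.lift_fst_assoc, pullback.lift_snd, pullback.lift_snd_assoc, Category.assoc, Category.comp_id]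

end Glue15

namespace Glue15

variable {C : Type u} [Category.{v} C] [HasPullbacks C]
variable {I : Type t} {U : C} (X : I → C) (ι : ∀ i, X i ⟶ U)
variable (S : ∀ i, (Over (X i))ᵒᵖ ⥤ Type w)

/-- The presheaf `P_i` on `C↓U` given by `P_i(V, δ) := S_i(U_i ×_U V, pr₁)`. -/
noncomputable def P (i : I) : (Over U)ᵒᵖ ⥤ Type w := (bc X ι i).op ⋙ S i

/-- The presheaf `P_{ij}` on `C↓U` given by `P_{ij}(V, δ) := S_i((U_i ×_U U_j) ×_U V, q_i)`. -/
noncomputable def Pij (i j : I) : (Over U)ᵒᵖ ⥤ Type w := (bc2 X ι i j).op ⋙ S i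

/-- The restriction map `r_{ij} : P_i ⟶ P_{ij}` induced by the canonical morphism
`(U_i ×_U U_j) ×_U V ⟶ U_i ×_U V` over `U_i`. -/
noncomputable def r (i j : I) : P X ι S i ⟶ Pij X ι S i j :=
  Functor.whiskerRight (NatTrans.op (resMor X ι i j)) (S i)

variable (Φ : ∀ i j, Pij X ι S i j ≅ Pij X ι S j i)

/-- The glued presheaf `L` on `C↓U`, whose sections over `(V, δ)` are the matching families
`(s_i) ∈ ∏_i P_i(V, δ)` with `Φ_{i,j}(r_{ij}(s_i)) = r_{ji}(s_j)` for all `i, j`. -/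
noncomputable def glued : (Over U)ᵒᵖ ⥤ Type max t w where
  obj V := { s : ∀ i, (P X ι S i).obj V //
    ∀ i j, (Φ i j).hom.app V ((r X ι S i j).app V (s i)) = (r X ι S j i).app V (s j) }
  map {V V'} f := TypeCat.ofHom fun s => ⟨fun i => (P X ι S i).map f (s.1 i), by
    intro i j
    have h1 := NatTrans.naturality_apply (r X ι S i j) f (s.1 i)
    have h2 := NatTrans.naturality_apply (Φ i j).hom f ((r X ι S i j).app V (s.1 i))
    have h3 := NatTrans.naturality_apply (r X ι S j i) f (s.1 j)
    rw [h1, h2, s.2 i j]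
    exact h3.symm⟩
  map_id V := by
    ext s i
    show (P X ι S i).map (𝟙 V) (s.1 i) = s.1 i
    simp
  map_comp {V V' V''} f g := by
    ext s i
    show (P X ι S i).map (f ≫ g) (s.1 i) = (P X ι S i).map g ((P X ι S i).map f (s.1 i))
    simp

end Glue15

namespace CategoryTheory.Presieve

variable {D : Type*} [Category* D] {K : GrothendieckTopology D} {κ : Type*}
  {L : Dᵒᵖ ⥤ Type*} {F : κ → Dᵒᵖ ⥤ Type*}

/-- `hlocal` says that the image of `L` in `∏ i, F i` is cut out by a local condition. The `π i`
are natural transformations given by their components, so that `L` may live in a larger universe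
than the `F i`. -/
theorem isSheaf_of_jointly_injective (π : ∀ i V, L.obj V → (F i).obj V)
    (hπ : ∀ i {V V'} (f : V ⟶ V') s, π i V' (L.map f s) = (F i).map f (π i V s))
    (hF : ∀ i, IsSheaf K (F i))
    (hinj : ∀ V (s s' : L.obj V), (∀ i, π i V s = π i V s') → s = s')
    (hlocal : ∀ {V : D} (R : Sieve V), R ∈ K V → ∀ t : ∀ i, (F i).obj (op V),
      (∀ ⦃W⦄ (f : W ⟶ V), R f →
        ∃ s : L.obj (op W), ∀ i, π i _ s = (F i).map f.op (t i)) →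
      ∃ s : L.obj (op V), ∀ i, π i _ s = t i) :
    IsSheaf K L := by
  intro V R hR
  have separated : IsSeparatedFor L R.arrows := fun x s s' hs hs' =>
    hinj _ s s' fun i => (hF i R hR).isSeparatedFor.ext fun W f hf => by
      rw [← hπ, ← hπ, hs f hf, hs' f hf]
  refine separated.isSheafFor fun x hx => ?_
  let xπ i : FamilyOfElements (F i) R.arrows := fun _ f hf => π i _ (x f hf)
  have hxπ i : (xπ i).Compatible := fun _ _ _ g₁ g₂ f₁ f₂ h₁ h₂ w => by
    simp only [xπ, ← hπ, hx g₁ g₂ h₁ h₂ w]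
  let t i := (hF i R hR).amalgamate (xπ i) (hxπ i)
  obtain ⟨s, hs⟩ := hlocal R hR t fun W f hf =>
    ⟨x f hf, fun i => ((hF i R hR).valid_glue (hxπ i) f hf).symm⟩
  refine ⟨s, fun W f hf => hinj _ _ _ fun i => ?_⟩
  rw [hπ, hs, (hF i R hR).valid_glue (hxπ i) f hf]

end CategoryTheory.Presieve

namespace Glue15

variable {C : Type u} [Category.{v} C] [HasPullbacks C]
variable {I : Type t} {U : C} (X : I → C) (ι : ∀ i, X i ⟶ U)
variable (S : ∀ i, (Over (X i))ᵒᵖ ⥤ Type w)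

noncomputable def overPullbackIsoBc (i : I) : Over.pullback (ι i) ≅ bc X ι i :=
  NatIso.ofComponents
    (fun V => Over.isoMk (pullbackSymmetry V.hom (ι i)) (by simp [bc]))
    (fun f => by
      apply Over.OverMorphism.ext
      unfold bc
      apply pullback.hom_ext <;> simp
      · erw [pullback.lift_snd, pullback.lift_fst]; simp
      · erw [pullback.lift_fst, pullback.lift_snd]; simp)

noncomputable def overPullbackCompMapIsoBc2 (i j : I) :
    Over.pullback (wmap X ι i j) ⋙ Over.map (pullback.fst (ι i) (ι j)) ≅ bc2 X ι i j :=
  NatIso.ofComponents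
    (fun V => Over.isoMk (pullbackSymmetry V.hom (wmap X ι i j)) (by simp [bc2]))
    (fun f => by
      apply Over.OverMorphism.ext
      unfold bc2
      apply pullback.hom_ext <;> simp
      · erw [pullback.lift_snd, pullback.lift_fst]; simp
      · erw [pullback.lift_fst, pullback.lift_snd]; simp)

instance bc_isContinuous (J : GrothendieckTopology C) (i : I) :
    (bc X ι i).IsContinuous (J.over U) (J.over (X i)) :=
  Functor.isContinuous_of_iso (overPullbackIsoBc X ι i) _ _

instance bc2_isContinuous (J : GrothendieckTopology C) (i j : I) :
    (bc2 X ι i j).IsContinuous (J.over U) (J.over (X i)) :=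
  Functor.isContinuous_comp' (overPullbackCompMapIsoBc2 X ι i j) _
    (J.over (pullback (ι i) (ι j))) _

variable {X ι S}

theorem P_isSheaf {J : GrothendieckTopology C} (hS : ∀ i, Presieve.IsSheaf (J.over (X i)) (S i))
    (i : I) : Presieve.IsSheaf (J.over U) (P X ι S i) :=
  (bc X ι i).op_comp_isSheaf_of_isSheaf_type (J.over U) (hS i)

theorem Pij_isSheaf {J : GrothendieckTopology C} (hS : ∀ i, Presieve.IsSheaf (J.over (X i)) (S i))
    (i j : I) : Presieve.IsSheaf (J.over U) (Pij X ι S i j) :=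
  (bc2 X ι i j).op_comp_isSheaf_of_isSheaf_type (J.over U) (hS i)

variable (X ι S)
variable (Φ : ∀ i j, Pij X ι S i j ≅ Pij X ι S j i)

theorem glued_isSheaf (J : GrothendieckTopology C)
    (hS : ∀ i, Presieve.IsSheaf (J.over (X i)) (S i)) :
    Presieve.IsSheaf (J.over U) (glued X ι S Φ) := by
  refine Presieve.isSheaf_of_jointly_injective (fun i _ s => s.1 i) (fun _ _ _ _ _ => rfl)
    (P_isSheaf hS) (fun _ _ _ h => Subtype.ext (funext h)) ?_
  intro V R hR t ht
  refine ⟨⟨t, fun i j => (Pij_isSheaf hS j i R hR).isSeparatedFor.ext fun W f hf => ?_⟩,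
    fun _ => rfl⟩
  obtain ⟨s, hs⟩ := ht f hf
  rw [← NatTrans.naturality_apply, ← NatTrans.naturality_apply, ← NatTrans.naturality_apply,
    ← hs i, ← hs j]
  exact s.2 i j

end Glue15
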